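/- arXiv:1710.06830 — 3 statements merged into one kernel-verified Lean document; each statement's English description precedes it below -/
import Mathlib

section
/- Let f be a positive linear functional on B(H) and S the Hilbert–Schmidt operator representing f on B₂(H), i.e., f(A) = trace(S*A) for all A ∈ B₂(H). Then S is a trace class operator, and trace(S) ≤ f(I). (One shows that for every finite subset F of an orthonormal basis, ∑_{e∈F} ⟨Se,e⟩ = f(P_F) ≤ f(I), where P_F is the projection onto span F.) -/
/-!
Testing `f` on the rank-one operators `|x⟩⟨x|` gives `⟪S x, x⟫ = f |x⟩⟨x| ≥ 0`, so `S` is positive.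
For a finite set `F` of basis vectors, `P_F = ∑_{e ∈ F} |e⟩⟨e|` is an orthogonal projection, and so is
`I - P_F`; positivity of `f` then gives `∑_{e ∈ F} ⟪S e, e⟫ = f P_F ≤ f I`. Thus the diagonal of `S` is
summable with sum at most `f I`. That sum is `∑ ‖√S e‖²`, so `√S` is Hilbert–Schmidt and
`S = √S √S` is trace class.
-/

open scoped ComplexOrder InnerProductSpace
noncomputable section

variable (H : Type*) [NormedAddCommGroup H] [InnerProductSpace ℂ H] [CompleteSpace H]

/-- The index set of a fixed Hilbert (orthonormal) basis of `H`. -/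
def stdIdx : Set H := (exists_hilbertBasis ℂ H).choose

/-- A fixed Hilbert (orthonormal) basis of `H`. -/
def stdBasis : HilbertBasis (stdIdx H) ℂ H := (exists_hilbertBasis ℂ H).choose_spec.choose

/-- `S` is a Hilbert–Schmidt operator. -/
def IsHilbertSchmidt (S : H →L[ℂ] H) : Prop :=
  Summable fun i => ‖S (stdBasis H i)‖ ^ 2

/-- `S` is a trace class operator: the product of two Hilbert–Schmidt operators. -/
def IsTraceClass (S : H →L[ℂ] H) : Prop :=
  ∃ B C : H →L[ℂ] H, IsHilbertSchmidt H B ∧ IsHilbertSchmidt H C ∧ S = B * C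

/-- The trace of an operator, computed in the fixed basis. -/
def trace (S : H →L[ℂ] H) : ℂ := ∑' i, ⟪(stdBasis H i : H), S (stdBasis H i)⟫_ℂ

/-- A functional on `B(H)` is positive if `f (X⋆ X) ≥ 0` for all `X`. -/
def IsPosFun (f : (H →L[ℂ] H) → ℂ) : Prop := ∀ X : H →L[ℂ] H, 0 ≤ f (star X * X)

/-- `X` has finite rank. -/
def IsFiniteRank (X : H →L[ℂ] H) : Prop := FiniteDimensional ℂ (LinearMap.range (X : H →ₗ[ℂ] H))

/-- A functional on `B(H)` is normal if it is represented by a trace class operator via the trace. -/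
def IsNormalFn (f : (H →L[ℂ] H) → ℂ) : Prop :=
  ∃ F : H →L[ℂ] H, IsTraceClass H F ∧ ∀ X : H →L[ℂ] H, f X = trace H (X * F)

open InnerProductSpace (rankOne)
open ContinuousLinearMap

theorem Orthonormal.isStarProjection_sum_rankOne {E ι : Type*} [NormedAddCommGroup E]
    [InnerProductSpace ℂ E] [CompleteSpace E] {v : ι → E} (hv : Orthonormal ℂ v) (s : Finset ι) :
    IsStarProjection (∑ i ∈ s, rankOne ℂ (v i) (v i)) := by
  classical
  have h := (OrthonormalBasis.span hv s).starProjection_eq_sum_rankOne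
  simp only [OrthonormalBasis.span_apply] at h
  rw [Finset.sum_coe_sort s fun i => rankOne ℂ (v i) (v i)] at h
  exact h ▸ isStarProjection_starProjection

theorem ContinuousLinearMap.isPositive_of_inner_nonneg {E : Type*} [NormedAddCommGroup E]
    [InnerProductSpace ℂ E] {T : E →L[ℂ] E} (hT : ∀ x, 0 ≤ ⟪T x, x⟫_ℂ) : T.IsPositive :=
  (isPositive_iff_complex T).2 fun x =>
    ⟨(Complex.eq_re_of_ofReal_le (hT x)).symm, (Complex.le_def.1 (hT x)).1⟩

theorem Complex.summable_re_of_sum_le {ι : Type*} {d : ι → ℂ} {c : ℂ} (hd : ∀ i, 0 ≤ d i)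
    (h : ∀ s : Finset ι, ∑ i ∈ s, d i ≤ c) : Summable fun i => (d i).re :=
  summable_of_sum_le (fun i => (Complex.le_def.1 (hd i)).1) fun s => by
    simpa only [Complex.re_sum] using (Complex.le_def.1 (h s)).1

namespace IsPosFun

variable {H} {f : (H →L[ℂ] H) →ₗ[ℂ] ℂ}

theorem map_nonneg_of_isStarProjection (hf : IsPosFun H f) {p : H →L[ℂ] H}
    (hp : IsStarProjection p) : 0 ≤ f p := by
  simpa only [hp.isSelfAdjoint.star_eq, hp.isIdempotentElem.eq] using hf p

theorem map_le_map_one_of_isStarProjection (hf : IsPosFun H f) {p : H →L[ℂ] H}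
    (hp : IsStarProjection p) : f p ≤ f 1 := by
  simpa only [map_sub, sub_nonneg] using hf.map_nonneg_of_isStarProjection hp.one_sub

theorem map_one_nonneg (hf : IsPosFun H f) : 0 ≤ f 1 :=
  hf.map_nonneg_of_isStarProjection (.one _)

theorem map_rankOne_self_nonneg (hf : IsPosFun H f) (x : H) : 0 ≤ f (rankOne ℂ x x) := by
  rcases eq_or_ne x 0 with rfl | hx
  · simp
  have hsq : star (rankOne ℂ x x) * rankOne ℂ x x = ⟪x, x⟫_ℂ • rankOne ℂ x x := by
    rw [star_eq_adjoint, InnerProductSpace.adjoint_rankOne, mul_def,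
      InnerProductSpace.rankOne_comp_rankOne]
  have hpos : (0 : ℂ) < ⟪x, x⟫_ℂ := by
    rw [inner_self_eq_norm_sq_to_K]
    exact pow_pos (Complex.zero_lt_real.2 (norm_pos_iff.2 hx)) 2
  have := hf (rankOne ℂ x x)
  rw [hsq, map_smul, smul_eq_mul] at this
  exact le_of_mul_le_mul_left (by rwa [mul_zero]) hpos

end IsPosFun

theorem ContinuousLinearMap.norm_sqrt_apply_sq {E : Type*} [NormedAddCommGroup E]
    [InnerProductSpace ℂ E] [CompleteSpace E] {T : E →L[ℂ] E} (hT : 0 ≤ T) (x : E) :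
    ‖CFC.sqrt T x‖ ^ 2 = RCLike.re ⟪x, T x⟫_ℂ := by
  rw [← inner_self_eq_norm_sq (𝕜 := ℂ), ← adjoint_inner_right,
    (CFC.sqrt_nonneg T).isSelfAdjoint.adjoint_eq, ← mul_apply_eq_comp, CFC.sqrt_mul_sqrt_self T hT]

section StdBasis

variable {H}

theorem isHilbertSchmidt_rankOne (x y : H) : IsHilbertSchmidt H (rankOne ℂ x y) :=
  (((stdBasis H).orthonormal.inner_products_summable y).mul_right (‖x‖ ^ 2)).congr fun i => by
    rw [InnerProductSpace.rankOne_apply, norm_smul, mul_pow, norm_inner_symm]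

theorem trace_mul_rankOne (T : H →L[ℂ] H) (x y : H) :
    trace H (T * rankOne ℂ x y) = ⟪y, T x⟫_ℂ := by
  simp only [trace, mul_apply_eq_comp, InnerProductSpace.rankOne_apply, map_smul, inner_smul_right]
  exact (stdBasis H).tsum_inner_mul_inner y (T x)

theorem isTraceClass_of_nonneg {S : H →L[ℂ] H} (hS : 0 ≤ S)
    (h : Summable fun i => RCLike.re ⟪(stdBasis H i : H), S (stdBasis H i)⟫_ℂ) :
    IsTraceClass H S :=
  have hsqrt : IsHilbertSchmidt H (CFC.sqrt S) := h.congr fun _ => (norm_sqrt_apply_sq hS _).symm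
  ⟨_, _, hsqrt, hsqrt, (CFC.sqrt_mul_sqrt_self S hS).symm⟩

end StdBasis

theorem stmt5 (f : (H →L[ℂ] H) →ₗ[ℂ] ℂ) (hf : IsPosFun H ⇑f)
    (S : H →L[ℂ] H)
    (hrep : ∀ A : H →L[ℂ] H, IsHilbertSchmidt H A → f A = trace H (star S * A)) :
    IsTraceClass H S ∧ trace H S ≤ f 1 := by
  have hf_rankOne (x : H) : f (rankOne ℂ x x) = ⟪S x, x⟫_ℂ := by
    rw [hrep _ (isHilbertSchmidt_rankOne x x), trace_mul_rankOne, star_eq_adjoint,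
      adjoint_inner_right]
  have hS : S.IsPositive :=
    isPositive_of_inner_nonneg fun x => hf_rankOne x ▸ hf.map_rankOne_self_nonneg x
  have hdiag (s : Finset (stdIdx H)) :
      ∑ i ∈ s, ⟪(stdBasis H i : H), S (stdBasis H i)⟫_ℂ ≤ f 1 :=
    calc ∑ i ∈ s, ⟪(stdBasis H i : H), S (stdBasis H i)⟫_ℂ
        = f (∑ i ∈ s, rankOne ℂ (stdBasis H i : H) (stdBasis H i)) := by
          simp only [map_sum, hf_rankOne, hS.inner_left_eq_inner_right]
      _ ≤ f 1 := hf.map_le_map_one_of_isStarProjection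
          ((stdBasis H).orthonormal.isStarProjection_sum_rankOne s)
  exact ⟨isTraceClass_of_nonneg ((nonneg_iff_isPositive S).2 hS)
      (Complex.summable_re_of_sum_le (fun _ => hS.inner_nonneg_right _) hdiag),
    tsum_le_of_sum_le' hf.map_one_nonneg hdiag⟩
end
end

section
/- Let h be a positive linear functional on B(H) that vanishes on all finite rank operators. If h ≤ g for some normal positive functional g (i.e., g − h is positive), then h = 0. -/
open scoped ComplexOrder InnerProductSpace
noncomputable section

variable (H : Type*) [NormedAddCommGroup H] [InnerProductSpace ℂ H] [CompleteSpace H]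

/-! If `P` is the orthogonal projection onto the span of finitely many basis vectors, then
`h P = 0` because `P` has finite rank, and `1 - P` is a projection, so
`h 1 = h (1 - P) ≤ g (1 - P) = trace ((1 - P) T)`, a tail of the series defining the trace of `T`.
Letting `P` increase gives `h 1 = 0`. The Cauchy–Schwarz inequality for the semi-inner product
`⟪a, b⟫ = h (a⋆ b)` of the GNS construction then gives `|h a|² ≤ h 1 · h (a⋆ a) = 0`. -/

namespace PositiveLinearMap

variable {A : Type*} [CStarAlgebra A] [PartialOrder A] [StarOrderedRing A]

theorem eq_zero_of_map_one_eq_zero (f : A →ₚ[ℂ] ℂ) (hf : f 1 = 0) : f = 0 := by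
  ext a
  have hone : ‖f.toPreGNS 1‖ = 0 := by simp [preGNS_norm_def, hf]
  have := norm_inner_le_norm (𝕜 := ℂ) (f.toPreGNS 1) (f.toPreGNS a)
  simpa [hone, preGNS_inner_def] using this

end PositiveLinearMap

theorem LinearMap.eq_zero_of_map_star_mul_self_nonneg {A : Type*} [CStarAlgebra A] [PartialOrder A]
    [StarOrderedRing A] (f : A →ₗ[ℂ] ℂ) (hf : ∀ x, 0 ≤ f (star x * x)) (h1 : f 1 = 0) : f = 0 := by
  let fp : A →ₚ[ℂ] ℂ := .mk₀ f fun a ha ↦ by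
    obtain ⟨x, rfl⟩ := CStarAlgebra.nonneg_iff_eq_star_mul_self.mp ha
    exact hf x
  ext a
  exact congr($(fp.eq_zero_of_map_one_eq_zero h1) a)

namespace HilbertBasis

variable {ι E : Type*} [NormedAddCommGroup E] [InnerProductSpace ℂ E] [DecidableEq E]
  (b : HilbertBasis ι ℂ E) (s : Finset ι) {i : ι}

theorem starProjection_span_image_apply_of_mem (hi : i ∈ s) :
    (Submodule.span ℂ (s.image b : Set E)).starProjection (b i) = b i :=
  Submodule.starProjection_eq_self_iff.mpr (Submodule.subset_span (Finset.mem_image_of_mem b hi))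

theorem starProjection_span_image_apply_of_notMem (hi : i ∉ s) :
    (Submodule.span ℂ (s.image b : Set E)).starProjection (b i) = 0 := by
  refine (Submodule.starProjection_apply_eq_zero_iff _).mpr ?_
  have : (ℂ ∙ b i) ⟂ Submodule.span ℂ (s.image b : Set E) := by
    rw [Submodule.isOrtho_span]
    rintro _ rfl _ hv
    obtain ⟨j, hj, rfl⟩ := Finset.mem_image.mp hv
    exact b.orthonormal.inner_eq_zero (by rintro rfl; exact hi hj)
  exact this.le (Submodule.mem_span_singleton_self _)

theorem tsum_inner_one_sub_starProjection_span_image_mul (X : E →L[ℂ] E) :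
    ∑' i, ⟪b i, ((1 - (Submodule.span ℂ (s.image b : Set E)).starProjection) * X) (b i)⟫_ℂ =
      ∑' i : {i // i ∉ s}, ⟪b i, X (b i)⟫_ℂ := by
  refine (tsum_congr fun i => ?_).trans (tsum_subtype {i | i ∉ s} fun i => ⟪b i, X (b i)⟫_ℂ).symm
  rw [mul_apply_eq_comp, sub_apply, one_apply_eq_self,
    inner_sub_right, ← Submodule.inner_starProjection_left_eq_right]
  by_cases hi : i ∈ s
  · rw [b.starProjection_span_image_apply_of_mem s hi, sub_self,
      Set.indicator_of_notMem (not_not.mpr hi)]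
  · rw [b.starProjection_span_image_apply_of_notMem s hi, inner_zero_left, sub_zero,
      Set.indicator_of_mem hi]

end HilbertBasis

open Filter Topology in
theorem tendsto_trace_one_sub_starProjection_span_mul [DecidableEq H] (T : H →L[ℂ] H) :
    Tendsto (fun s : Finset (stdIdx H) =>
      trace H ((1 - (Submodule.span ℂ (s.image (stdBasis H) : Set H)).starProjection) * T))
      atTop (𝓝 0) := by
  simpa only [trace, (stdBasis H).tsum_inner_one_sub_starProjection_span_image_mul]
    using tendsto_tsum_compl_atTop_zero fun i => ⟪(stdBasis H i : H), T (stdBasis H i)⟫_ℂ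

theorem stmt7 (h g : (H →L[ℂ] H) →ₗ[ℂ] ℂ) (hpos : IsPosFun H ⇑h)
    (hvanish : ∀ A : H →L[ℂ] H, IsFiniteRank H A → h A = 0)
    (T : H →L[ℂ] H)
    (hg : ∀ X : H →L[ℂ] H, g X = trace H (X * T))
    (hle : IsPosFun H fun X => g X - h X) :
    h = 0 := by
  classical
  refine h.eq_zero_of_map_star_mul_self_nonneg hpos (le_antisymm ?_ (by simpa using hpos 1))
  refine ge_of_tendsto' (tendsto_trace_one_sub_starProjection_span_mul H T) fun s => ?_
  set K := Submodule.span ℂ (s.image (stdBasis H) : Set H)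
  have hQ : IsStarProjection (1 - K.starProjection) := isStarProjection_starProjection.one_sub
  have hQ_sq : star (1 - K.starProjection) * (1 - K.starProjection) = 1 - K.starProjection := by
    rw [hQ.isSelfAdjoint.star_eq, hQ.isIdempotentElem.eq]
  have hK_fin : IsFiniteRank H K.starProjection := by
    rw [IsFiniteRank, Submodule.range_starProjection]
    infer_instance
  calc h 1 = h (1 - K.starProjection) := by rw [map_sub, hvanish _ hK_fin, sub_zero]
    _ ≤ g (1 - K.starProjection) := sub_nonneg.mp (hQ_sq ▸ hle (1 - K.starProjection))
    _ = _ := hg _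
end
end

section
/- Let f be a normal positive functional on B(H) with f = f_S for a positive trace class operator S, and let φ be the restriction of f to the finite rank operators B_F(H). Then f is the smallest positive extension of φ: for every positive linear functional g on B(H) with g = φ on B_F(H), one has f ≤ g (i.e., g − f is positive). -/
open scoped ComplexOrder InnerProductSpace
noncomputable section

variable (H : Type*) [NormedAddCommGroup H] [InnerProductSpace ℂ H] [CompleteSpace H]

/-!
Write `S = T⋆T` with `T` Hilbert–Schmidt. For a finite set `F` of basis indices let `P` be the
orthogonal projection onto the span of the corresponding basis vectors. Positivity of `g` at
`((1 - P) X)⋆ ((1 - P) X) = X⋆X - X⋆PX` gives `g (X⋆X) ≥ g (X⋆PX)`, and `X⋆PX` has finite rank, so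
`g (X⋆PX) = tr (X⋆PXS) = ∑_{j ∈ F} ⟪e_j, XSX⋆ e_j⟫`. Cyclicity of the trace on products of
Hilbert–Schmidt operators shows that these are the partial sums of a series with sum
`tr (X⋆XS)`, and the positive cone of `ℂ` is closed.
-/

open ContinuousLinearMap

namespace HilbertBasis

variable {ι 𝕜 E : Type*} [RCLike 𝕜] [NormedAddCommGroup E] [InnerProductSpace 𝕜 E]
  (b : HilbertBasis ι 𝕜 E)

theorem hasSum_norm_inner_sq (x : E) : HasSum (fun i => ‖⟪b i, x⟫_𝕜‖ ^ 2) (‖x‖ ^ 2) := by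
  simpa [b.repr_apply_apply] using lp.hasSum_norm (p := 2) (by norm_num) (b.repr x)

theorem summable_norm_inner_sq_prod {u : ι → E} (hu : Summable fun i => ‖u i‖ ^ 2) :
    Summable fun p : ι × ι => ‖⟪u p.1, b p.2⟫_𝕜‖ ^ 2 := by
  refine (summable_prod_of_nonneg fun _ => by positivity).2 ⟨fun i => ?_, ?_⟩
  · simpa [norm_inner_symm] using (b.hasSum_norm_inner_sq (u i)).summable
  · refine hu.congr fun i => ?_
    simpa [norm_inner_symm] using (b.hasSum_norm_inner_sq (u i)).tsum_eq.symm

/- Both sides are iterated sums of `⟪A (b i), b j⟫ * ⟪b j, B (b i)⟫`, which is absolutely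
summable over pairs since `|xy| ≤ (|x|² + |y|²) / 2`. -/
theorem hasSum_inner_adjoint_apply [CompleteSpace E] {A B : E →L[𝕜] E}
    (hA : Summable fun i => ‖A (b i)‖ ^ 2) (hB : Summable fun i => ‖B (b i)‖ ^ 2) :
    HasSum (fun j => ⟪adjoint B (b j), adjoint A (b j)⟫_𝕜) (∑' i, ⟪A (b i), B (b i)⟫_𝕜) := by
  set d : ι × ι → 𝕜 := fun p => ⟪A (b p.1), b p.2⟫_𝕜 * ⟪b p.2, B (b p.1)⟫_𝕜
  have hd : Summable d := by
    refine .of_norm_bounded (((b.summable_norm_inner_sq_prod hA).add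
      (b.summable_norm_inner_sq_prod hB)).div_const 2) fun p => ?_
    have := two_mul_le_add_sq ‖⟪A (b p.1), b p.2⟫_𝕜‖ ‖⟪B (b p.1), b p.2⟫_𝕜‖
    simp only [d, norm_mul, norm_inner_symm (b p.2)]
    linarith
  have hrow : HasSum (fun i => ⟪A (b i), B (b i)⟫_𝕜) (∑' p, d p) :=
    hd.hasSum.prod_fiberwise fun i => b.hasSum_inner_mul_inner _ _
  have hcol : ∀ j, HasSum (fun i => d (i, j)) ⟪adjoint B (b j), adjoint A (b j)⟫_𝕜 := fun j => by
    convert b.hasSum_inner_mul_inner (adjoint B (b j)) (adjoint A (b j)) using 2 with i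
    simp only [d, adjoint_inner_left, adjoint_inner_right, mul_comm]
  rw [hrow.tsum_eq]
  exact ((Equiv.prodComm ι ι).hasSum_iff.2 hd.hasSum).prod_fiberwise hcol

theorem hasSum_norm_adjoint_apply_sq [CompleteSpace E] {A : E →L[𝕜] E}
    (hA : Summable fun i => ‖A (b i)‖ ^ 2) :
    HasSum (fun j => ‖adjoint A (b j)‖ ^ 2) (∑' i, ‖A (b i)‖ ^ 2) := by
  refine (RCLike.hasSum_ofReal 𝕜).1 ?_
  push_cast [RCLike.ofReal_tsum]
  simpa only [inner_self_eq_norm_sq_to_K] using b.hasSum_inner_adjoint_apply hA hA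

end HilbertBasis

theorem IsStarProjection.star_mul_mul_self {R : Type*} [Ring R] [StarRing R] {p : R}
    (hp : IsStarProjection p) (x : R) : star (p * x) * (p * x) = star x * p * x := by
  rw [star_mul, hp.isSelfAdjoint.star_eq, mul_assoc, ← mul_assoc p, hp.isIdempotentElem.eq,
    mul_assoc]

theorem IsFiniteRank.mul_left {E : Type*} [NormedAddCommGroup E] [InnerProductSpace ℂ E]
    (A : E →L[ℂ] E) {B : E →L[ℂ] E} (hB : IsFiniteRank E B) : IsFiniteRank E (A * B) := by
  unfold IsFiniteRank at *
  rw [mul_def, toLinearMap_comp, LinearMap.range_comp]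
  infer_instance

theorem IsFiniteRank.mul_right {E : Type*} [NormedAddCommGroup E] [InnerProductSpace ℂ E]
    {A : E →L[ℂ] E} (hA : IsFiniteRank E A) (B : E →L[ℂ] E) : IsFiniteRank E (A * B) := by
  unfold IsFiniteRank at *
  exact Submodule.finiteDimensional_of_le (LinearMap.range_comp_le_range _ _)

variable {H}

theorem IsHilbertSchmidt.star {A : H →L[ℂ] H} (hA : IsHilbertSchmidt H A) :
    IsHilbertSchmidt H (star A) := by
  simpa [IsHilbertSchmidt, star_eq_adjoint] using
    ((stdBasis H).hasSum_norm_adjoint_apply_sq hA).summable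

theorem IsHilbertSchmidt.mul_left (X : H →L[ℂ] H) {A : H →L[ℂ] H}
    (hA : IsHilbertSchmidt H A) : IsHilbertSchmidt H (X * A) :=
  .of_nonneg_of_le (fun _ => by positivity)
    (fun i => by rw [← mul_pow]; gcongr; exact X.le_opNorm _) (Summable.mul_left (‖X‖ ^ 2) hA)

theorem IsHilbertSchmidt.mul_right {A : H →L[ℂ] H} (hA : IsHilbertSchmidt H A)
    (X : H →L[ℂ] H) : IsHilbertSchmidt H (A * X) := by
  simpa [star_mul] using (hA.star.mul_left (Star.star X)).star

theorem IsTraceClass.isHilbertSchmidt_of_eq_star_mul_self {S T : H →L[ℂ] H}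
    (hS : IsTraceClass H S) (hST : S = star T * T) : IsHilbertSchmidt H T := by
  obtain ⟨B, C, hB, hC, rfl⟩ := hS
  refine .of_nonneg_of_le (fun _ => by positivity) (fun i => ?_)
    ((Summable.add hB.star hC).div_const 2)
  set x : H := stdBasis H i
  have hx : ((‖T x‖ ^ 2 : ℝ) : ℂ) = ⟪star B x, C x⟫_ℂ := by
    rw [star_eq_adjoint, adjoint_inner_left, ← mul_apply_eq_comp, hST, star_eq_adjoint,
      mul_apply_eq_comp, adjoint_inner_right, inner_self_eq_norm_sq_to_K]
    push_cast
    rfl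
  calc ‖T x‖ ^ 2 = ‖⟪star B x, C x⟫_ℂ‖ := by rw [← hx]; simp
    _ ≤ ‖star B x‖ * ‖C x‖ := norm_inner_le_norm _ _
    _ ≤ (‖star B x‖ ^ 2 + ‖C x‖ ^ 2) / 2 := by nlinarith [two_mul_le_add_sq ‖star B x‖ ‖C x‖]

theorem hasSum_trace_mul_star {A B : H →L[ℂ] H} (hA : IsHilbertSchmidt H A)
    (hB : IsHilbertSchmidt H B) :
    HasSum (fun j => ⟪(stdBasis H j : H), (B * star A) (stdBasis H j)⟫_ℂ)
      (trace H (star A * B)) := by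
  have htrace : trace H (star A * B) = ∑' i, ⟪A (stdBasis H i), B (stdBasis H i)⟫_ℂ := by
    simp only [trace, star_eq_adjoint, mul_apply_eq_comp, adjoint_inner_right]
  rw [htrace]
  refine ((stdBasis H).hasSum_inner_adjoint_apply hA hB).congr_fun fun j => ?_
  rw [adjoint_inner_left, star_eq_adjoint, mul_apply_eq_comp]

theorem trace_star_mul_comm {A B : H →L[ℂ] H} (hA : IsHilbertSchmidt H A)
    (hB : IsHilbertSchmidt H B) : trace H (star A * B) = trace H (B * star A) :=
  (hasSum_trace_mul_star hA hB).tsum_eq.symm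

/- Cyclicity twice: `Y⋆Y T⋆T = (T Y⋆Y)⋆ T` and `T Y⋆Y T⋆ = (Y T⋆)⋆ (Y T⋆)`. -/
theorem hasSum_trace_star_mul_self_mul {T : H →L[ℂ] H} (hT : IsHilbertSchmidt H T)
    (Y : H →L[ℂ] H) :
    HasSum (fun j => ⟪(stdBasis H j : H), (Y * (star T * T) * star Y) (stdBasis H j)⟫_ℂ)
      (trace H (star Y * Y * (star T * T))) := by
  have hYT := hT.star.mul_left Y
  have hcycle := trace_star_mul_comm (hT.mul_right (star Y * Y)) hT
  simp only [star_mul, star_star, mul_assoc] at hcycle ⊢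
  rw [hcycle]
  simpa [star_mul, mul_assoc] using hasSum_trace_mul_star hYT hYT

open Classical in
def stdBasisProj (F : Finset (stdIdx H)) : H →L[ℂ] H :=
  (Submodule.span ℂ (F.image (stdBasis H) : Set H)).starProjection

theorem isStarProjection_stdBasisProj (F : Finset (stdIdx H)) :
    IsStarProjection (stdBasisProj F) :=
  isStarProjection_starProjection

theorem isFiniteRank_stdBasisProj (F : Finset (stdIdx H)) : IsFiniteRank H (stdBasisProj F) := by
  unfold IsFiniteRank stdBasisProj
  rw [Submodule.range_starProjection]
  infer_instance

theorem stdBasisProj_apply_of_mem {F : Finset (stdIdx H)} {j : stdIdx H} (hj : j ∈ F) :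
    stdBasisProj F (stdBasis H j) = stdBasis H j := by
  classical
  exact Submodule.starProjection_eq_self_iff.2
    (Submodule.subset_span (Finset.mem_coe.2 (Finset.mem_image_of_mem _ hj)))

theorem stdBasisProj_apply_of_notMem {F : Finset (stdIdx H)} {j : stdIdx H} (hj : j ∉ F) :
    stdBasisProj F (stdBasis H j) = 0 := by
  classical
  unfold stdBasisProj
  refine (Submodule.starProjection_apply_eq_zero_iff _).2 ?_
  have hortho : Submodule.span ℂ (F.image (stdBasis H) : Set H) ⟂
      Submodule.span ℂ {stdBasis H j} := by
    rw [Submodule.isOrtho_span]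
    rintro _ hu _ rfl
    obtain ⟨k, hk, rfl⟩ := Finset.mem_image.1 hu
    exact (stdBasis H).orthonormal.2 (ne_of_mem_of_not_mem hk hj)
  exact hortho.ge (Submodule.mem_span_singleton_self _)

theorem trace_star_stdBasisProj_mul {T : H →L[ℂ] H} (hT : IsHilbertSchmidt H T)
    (F : Finset (stdIdx H)) (X : H →L[ℂ] H) :
    trace H (star (stdBasisProj F * X) * (stdBasisProj F * X) * (star T * T))
      = ∑ j ∈ F, ⟪(stdBasis H j : H), (X * (star T * T) * star X) (stdBasis H j)⟫_ℂ := by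
  set P := stdBasisProj F
  set Z := X * (star T * T) * star X
  have hP := (isStarProjection_stdBasisProj F).isSelfAdjoint
  have hterm : ∀ j, ⟪(stdBasis H j : H), (P * X * (star T * T) * star (P * X)) (stdBasis H j)⟫_ℂ
      = ⟪P (stdBasis H j), Z (P (stdBasis H j))⟫_ℂ := fun j => by
    rw [star_mul, hP.star_eq]
    simp only [mul_apply_eq_comp]
    rw [← adjoint_inner_left, ← star_eq_adjoint, hP.star_eq]
    rfl
  refine (hasSum_trace_star_mul_self_mul hT _).unique ?_
  rw [funext hterm]
  convert hasSum_sum_of_ne_finset_zero (L := .unconditional _) (s := F) fun j hj => ?_ using 1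
  · exact Finset.sum_congr rfl fun j hj => by rw [stdBasisProj_apply_of_mem hj]
  · rw [stdBasisProj_apply_of_notMem hj, inner_zero_left]

/-- a normal positive functional `f_S` is the smallest positive extension of its
restriction to the finite rank operators: any positive `g` agreeing with it on `B_F(H)`
dominates it. -/
theorem stmt11 (S : H →L[ℂ] H) (hS : S.IsPositive) (hStc : IsTraceClass H S)
    (g : (H →L[ℂ] H) →ₗ[ℂ] ℂ) (hg : IsPosFun H ⇑g)
    (hagree : ∀ A : H →L[ℂ] H, IsFiniteRank H A → g A = trace H (A * S)) :
    IsPosFun H fun X => g X - trace H (X * S) := by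
  obtain ⟨T, rfl⟩ := CStarAlgebra.nonneg_iff_eq_star_mul_self.1 ((nonneg_iff_isPositive S).2 hS)
  have hT := hStc.isHilbertSchmidt_of_eq_star_mul_self rfl
  intro X
  refine ge_of_tendsto' (tendsto_const_nhds.sub (hasSum_trace_star_mul_self_mul hT X)) fun F => ?_
  set P := stdBasisProj F
  have hP := isStarProjection_stdBasisProj F
  calc 0 ≤ g (star ((1 - P) * X) * ((1 - P) * X)) := hg _
    _ = g (star X * X) - g (star (P * X) * (P * X)) := by
      rw [hP.one_sub.star_mul_mul_self, hP.star_mul_mul_self, mul_sub, sub_mul, mul_one, map_sub]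
    _ = g (star X * X) - _ := by
      rw [hagree _ (((isFiniteRank_stdBasisProj F).mul_right X).mul_left _),
        trace_star_stdBasisProj_mul hT]
end
end
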